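/- Let α be a representation of a countable discrete unital inverse semigroup S on a set X. If A ⊆ X is S-domain Følner, then for every ε > 0 and every finite 𝓕 ⊆ S there is a finite non-empty F₀ ⊆ A such that |α_s(F₀ ∩ D_{s*s}) \ F₀| ≤ ε|F₀| for every s ∈ 𝓕 and F₀ has exactly one ≈-equivalence class, i.e., u ≈ v for all u, v ∈ F₀. -/

import Mathlib

open scoped ENNReal

/-- Mixin recording that a semigroup with a star operation is an inverse semigroup:
for every `s` the element `star s` is the unique `t` with `s t s = s` and `t s t = t`. -/
class IsInverseSemigroup (S : Type*) [Semigroup S] [Star S] : Prop where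
  mul_star_mul_self : ∀ s : S, s * star s * s = s
  star_mul_self_mul_star : ∀ s : S, star s * s * star s = star s
  star_unique : ∀ s t : S, s * t * s = s → t * s * t = t → t = star s

/-- A representation of a unital inverse semigroup `S` on a set `X`: a unital semigroup
homomorphism into the inverse semigroup of partial bijections of `X` (encoded as `PEquiv`s)
compatible with the involution.  The domain of the partial bijection `α s` is `D_{s*s}` and
its range is `D_{ss*}`; for an idempotent `e`, `D_e` is the domain of `α e`. -/
structure InverseSemigroupRep (S : Type*) [Monoid S] [Star S] (X : Type*) where
  α : S → X ≃. X
  map_one : α 1 = PEquiv.refl X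
  map_star : ∀ s : S, α (star s) = (α s).symm
  map_mul : ∀ s t : S, α (s * t) = (α t).trans (α s)

/-- A finitely additive `[0,∞]`-valued measure on the power set of `X`. -/
def IsFinAddMeasure {X : Type*} (μ : Set X → ℝ≥0∞) : Prop :=
  μ (∅ : Set X) = 0 ∧ ∀ A B : Set X, Disjoint A B → μ (A ∪ B) = μ A + μ B

namespace InverseSemigroupRep

variable {S X : Type*} [Monoid S] [Star S] (r : InverseSemigroupRep S X)

/-- The domain `D_{s*s}` of the partial bijection `α s`; for an idempotent `e`,
`r.dom e` is the set `D_e`. -/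
def dom (s : S) : Set X := {x | ((r.α s) x).isSome}

/-- The image `α_s(B)` of a subset `B ⊆ X` under the partial bijection `α s`. -/
def im (s : S) (B : Set X) : Set X := {y | ∃ x ∈ B, (r.α s) x = some y}

/-- `A ⊆ X` is `S`-domain measurable: there is a finitely additive measure on `𝒫(X)`
normalized at `A` and invariant on domains. -/
def SDomainMeasurableSet (A : Set X) : Prop :=
  ∃ μ : Set X → ℝ≥0∞, IsFinAddMeasure μ ∧ μ A = 1 ∧
    ∀ (s : S) (B : Set X), B ⊆ r.dom s → μ (r.im s B) = μ B

/-- `A ⊆ X` is `S`-amenable: there is a finitely additive measure on `𝒫(X)` normalized at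
`A`, invariant on domains, and localized (`μ(B) = μ(B ∩ D_{t*t})` for all `t`). -/
def SAmenableSet (A : Set X) : Prop :=
  ∃ μ : Set X → ℝ≥0∞, IsFinAddMeasure μ ∧ μ A = 1 ∧
    (∀ (s : S) (B : Set X), B ⊆ r.dom s → μ (r.im s B) = μ B) ∧
    (∀ (t : S) (B : Set X), μ B = μ (B ∩ r.dom t))

/-- `A ⊆ X` is `S`-paradoxical: `A` admits two disjoint families of pairwise disjoint
subsets, each contained in the appropriate domain, whose images partition `A` twice. -/
def SParadoxical (A : Set X) : Prop :=
  ∃ (n m : ℕ) (s : Fin n → S) (t : Fin m → S) (As : Fin n → Set X) (Bs : Fin m → Set X),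
    (∀ i, As i ⊆ A) ∧ (∀ j, Bs j ⊆ A) ∧
    (∀ i, As i ⊆ r.dom (s i)) ∧ (∀ j, Bs j ⊆ r.dom (t j)) ∧
    (∀ i j, i ≠ j → Disjoint (As i) (As j)) ∧
    (∀ i j, i ≠ j → Disjoint (Bs i) (Bs j)) ∧
    (∀ i j, Disjoint (As i) (Bs j)) ∧
    (∀ i j, i ≠ j → Disjoint (r.im (s i) (As i)) (r.im (s j) (As j))) ∧
    (∀ i j, i ≠ j → Disjoint (r.im (t i) (Bs i)) (r.im (t j) (Bs j))) ∧
    (⋃ i, r.im (s i) (As i)) = A ∧ (⋃ j, r.im (t j) (Bs j)) = A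

/-- `A ⊆ X` is `S`-domain Følner: there is a sequence of finite non-empty subsets `F n ⊆ A`
with `|α_s(F n ∩ D_{s*s}) \ F n| / |F n| → 0` for every `s ∈ S`. -/
def SDomainFolner (A : Set X) : Prop :=
  ∃ F : ℕ → Finset X, (∀ n, (F n).Nonempty) ∧ (∀ n, (F n : Set X) ⊆ A) ∧
    ∀ s : S, Filter.Tendsto
      (fun n => ((r.im s ((F n : Set X) ∩ r.dom s) \ (F n : Set X)).ncard : ℝ) / (F n).card)
      Filter.atTop (nhds 0)

end InverseSemigroupRep

/-!
Choose a Følner set `G` whose `s`-boundaries, `s ∈ 𝓕`, add up to less than `ε |G|`. Each `α_s`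
preserves orbits, so the `s`-boundary of the part of `G` in one orbit is the part of the
`s`-boundary of `G` in that orbit. Summing over the orbits met by `G`, the boundaries of the parts
add up to at most those of `G`, so by averaging some orbit part has relative boundary below `ε`.
-/

open Finset Filter Topology

namespace InverseSemigroupRep

variable {S X : Type*} [Monoid S] [Star S] (r : InverseSemigroupRep S X)

lemma mem_dom_of_apply_eq_some {s : S} {u v : X} (h : r.α s u = some v) : u ∈ r.dom s := by
  simp [dom, h]

def orbitRel : Setoid X where
  r u v := ∃ s : S, r.α s u = some v
  iseqv :=
    { refl := fun _ => ⟨1, by simp [r.map_one]⟩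
      symm := fun ⟨s, hs⟩ => ⟨star s, by rw [r.map_star]; exact (PEquiv.eq_some_iff _).2 hs⟩
      trans := fun ⟨s, hs⟩ ⟨t, ht⟩ =>
        ⟨t * s, by rw [r.map_mul, PEquiv.trans_eq_some]; exact ⟨_, hs, ht⟩⟩ }

variable [DecidableEq X]

/-- `α_s(F ∩ D_{s*s}) \ F`, as a finset. -/
def boundary (s : S) (F : Finset X) : Finset X :=
  F.filterMap (r.α s) (fun _ _ _ => (r.α s).inj) \ F

lemma coe_boundary (s : S) (F : Finset X) :
    (r.boundary s F : Set X) = r.im s (F ∩ r.dom s) \ F := by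
  ext y
  simp only [boundary, im, dom, coe_sdiff, coe_filterMap, Set.mem_sdiff, Set.mem_ofPred_eq,
    Set.mem_inter_iff, mem_coe]
  refine and_congr_left fun _ => ⟨fun ⟨x, hxF, hxy⟩ => ⟨x, ⟨hxF, by simp [hxy]⟩, hxy⟩,
    fun ⟨x, ⟨hxF, _⟩, hxy⟩ => ⟨x, hxF, hxy⟩⟩

lemma ncard_im_inter_dom_sdiff (s : S) (F : Finset X) :
    (r.im s (F ∩ r.dom s) \ F).ncard = #(r.boundary s F) := by
  rw [← coe_boundary, Set.ncard_coe_finset]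

lemma boundary_filter {s : S} (P : X → Prop) [DecidablePred P]
    (hP : ∀ x y, r.α s x = some y → (P x ↔ P y)) (F : Finset X) :
    r.boundary s (F.filter P) = (r.boundary s F).filter P := by
  ext y
  simp only [boundary, Finset.mem_sdiff, Finset.mem_filterMap, Finset.mem_filter]
  constructor
  · rintro ⟨⟨x, ⟨hxF, hPx⟩, hxy⟩, hy⟩
    exact ⟨⟨⟨x, hxF, hxy⟩, fun hyF => hy ⟨hyF, (hP x y hxy).1 hPx⟩⟩, (hP x y hxy).1 hPx⟩
  · rintro ⟨⟨⟨x, hxF, hxy⟩, hy⟩, hPy⟩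
    exact ⟨⟨x, ⟨hxF, (hP x y hxy).2 hPy⟩, hxy⟩, fun h => hy h.1⟩

lemma exists_orbit_subset_sum_card_boundary_lt {G : Finset X} {𝓕 : Finset S} {ε : ℝ}
    (h : ∑ s ∈ 𝓕, (#(r.boundary s G) : ℝ) < ε * #G) :
    ∃ C ⊆ G, C.Nonempty ∧ (∀ u ∈ C, ∀ v ∈ C, r.orbitRel u v) ∧
      ∑ s ∈ 𝓕, (#(r.boundary s C) : ℝ) < ε * #C := by
  classical
  let q : X → Quotient r.orbitRel := Quotient.mk _
  let part (c : Quotient r.orbitRel) : Finset X := G.filter (q · = c)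
  have hpart (s : S) (c) : r.boundary s (part c) = (r.boundary s G).filter (q · = c) :=
    r.boundary_filter _ (fun x y hxy => by rw [show q x = q y from Quotient.sound ⟨s, hxy⟩]) G
  have hboundary (s : S) : ∑ c ∈ G.image q, #(r.boundary s (part c)) ≤ #(r.boundary s G) := by
    simp_rw [hpart, sum_card_fiberwise_eq_card_filter]
    exact card_filter_le _ _
  have hsum : ∑ c ∈ G.image q, ∑ s ∈ 𝓕, (#(r.boundary s (part c)) : ℝ) <
      ∑ c ∈ G.image q, ε * #(part c) :=
    calc _ = ∑ s ∈ 𝓕, ∑ c ∈ G.image q, (#(r.boundary s (part c)) : ℝ) := sum_comm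
      _ ≤ ∑ s ∈ 𝓕, (#(r.boundary s G) : ℝ) := sum_le_sum fun s _ => by exact_mod_cast hboundary s
      _ < ε * #G := h
      _ = _ := by rw [card_eq_sum_card_image q G, Nat.cast_sum, mul_sum]
  obtain ⟨c, hc, hlt⟩ := exists_lt_of_sum_lt hsum
  obtain ⟨x, hxG, rfl⟩ := mem_image.1 hc
  refine ⟨part (q x), filter_subset _ _, ⟨x, mem_filter.2 ⟨hxG, rfl⟩⟩, fun u hu v hv => ?_, hlt⟩
  exact Quotient.exact ((mem_filter.1 hu).2.trans (mem_filter.1 hv).2.symm)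

variable {r} in
lemma SDomainFolner.exists_sum_card_boundary_lt {A : Set X} (hA : r.SDomainFolner A) {ε : ℝ}
    (hε : 0 < ε) (𝓕 : Finset S) :
    ∃ G : Finset X, (G : Set X) ⊆ A ∧ ∑ s ∈ 𝓕, (#(r.boundary s G) : ℝ) < ε * #G := by
  obtain ⟨F, hne, hFA, hF⟩ := hA
  have hsum : Tendsto (fun n => ∑ s ∈ 𝓕, (#(r.boundary s (F n)) : ℝ) / #(F n)) atTop (𝓝 0) := by
    simpa [ncard_im_inter_dom_sdiff] using tendsto_finsetSum 𝓕 fun s _ => hF s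
  obtain ⟨n, hn⟩ := (hsum.eventually (gt_mem_nhds hε)).exists
  refine ⟨F n, hFA n, ?_⟩
  rwa [← sum_div, div_lt_iff₀ (by exact_mod_cast (hne n).card_pos)] at hn

end InverseSemigroupRep

theorem statement16_general {S X : Type*} [Monoid S] [Star S]
    (r : InverseSemigroupRep S X) (A : Set X) (hA : r.SDomainFolner A) :
    ∀ ε : ℝ, 0 < ε → ∀ 𝓕 : Finset S, ∃ F₀ : Finset X, F₀.Nonempty ∧ (F₀ : Set X) ⊆ A ∧
      (∀ s ∈ 𝓕,
        ((r.im s ((F₀ : Set X) ∩ r.dom s) \ (F₀ : Set X)).ncard : ℝ) ≤ ε * F₀.card) ∧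
      (∀ u ∈ F₀, ∀ v ∈ F₀, ∃ s : S, u ∈ r.dom s ∧ (r.α s) u = some v) := by
  classical
  intro ε hε 𝓕
  obtain ⟨G, hGA, hG⟩ := hA.exists_sum_card_boundary_lt hε 𝓕
  obtain ⟨C, hCG, hCne, hCorbit, hC⟩ := r.exists_orbit_subset_sum_card_boundary_lt hG
  refine ⟨C, hCne, (coe_subset.2 hCG).trans hGA, fun s hs => ?_, fun u hu v hv => ?_⟩
  · rw [r.ncard_im_inter_dom_sdiff]
    exact (single_le_sum (f := fun t => (#(r.boundary t C) : ℝ)) (fun _ _ => by positivity) hs).trans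
      hC.le
  · obtain ⟨s, hs⟩ := hCorbit u hu v hv
    exact ⟨s, r.mem_dom_of_apply_eq_some hs, hs⟩

/-- If `A ⊆ X` is `S`-domain Følner then for every `ε > 0` and finite `𝓕 ⊆ S` there is a
finite non-empty `(ε, 𝓕)`-domain Følner subset `F₀ ⊆ A` with exactly one equivalence class
for the relation `u ≈ v ⟺ ∃ s, u ∈ D_{s*s} ∧ α_s(u) = v`. -/
theorem statement16 {S X : Type*} [Monoid S] [Star S] [IsInverseSemigroup S] [Countable S]
    (r : InverseSemigroupRep S X) (A : Set X) (hA : r.SDomainFolner A) :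
    ∀ ε : ℝ, 0 < ε → ∀ 𝓕 : Finset S, ∃ F₀ : Finset X, F₀.Nonempty ∧ (F₀ : Set X) ⊆ A ∧
      (∀ s ∈ 𝓕,
        ((r.im s ((F₀ : Set X) ∩ r.dom s) \ (F₀ : Set X)).ncard : ℝ) ≤ ε * F₀.card) ∧
      (∀ u ∈ F₀, ∀ v ∈ F₀, ∃ s : S, u ∈ r.dom s ∧ (r.α s) u = some v) :=
  statement16_general r A hA
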